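/- arXiv:2304.09540 — 8 statements merged into one kernel-verified Lean document; each statement's English description precedes it below -/
import Mathlib

section
/- With zero feedback (f = 0), the time-indexed support sets at level ℓ stabilize by time ℓ: for every level ℓ, supp_{r,0}(B,ℓ,*) = supp_{r,0}(B,ℓ,ℓ), i.e., any concept at level ℓ that is ever supported is already supported at time ℓ. -/
open scoped Classical
noncomputable section

/-- A concept hierarchy: concepts at levels `0..L`, each concept at level `≥ 1`
has exactly `k` children one level below, level-0 concepts have no children,
there are exactly `k` top-level concepts, and every non-top concept has a parent. -/
structure ConceptHierarchy (α : Type) [DecidableEq α] where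
  L : ℕ
  k : ℕ
  concepts : Finset α
  level : α → ℕ
  children : α → Finset α
  level_le : ∀ c ∈ concepts, level c ≤ L
  children_mem : ∀ c ∈ concepts, ∀ c' ∈ children c, c' ∈ concepts
  children_level : ∀ c ∈ concepts, ∀ c' ∈ children c, level c' + 1 = level c
  children_card : ∀ c ∈ concepts, 1 ≤ level c → (children c).card = k
  children_leaf : ∀ c ∈ concepts, level c = 0 → children c = ∅
  top_card : (concepts.filter (fun c => level c = L)).card = k
  has_parent : ∀ c ∈ concepts, level c < L → ∃ c' ∈ concepts, c ∈ children c'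

namespace ConceptHierarchy

variable {α : Type} [DecidableEq α]

/-- The parents of a concept. -/
def parents (H : ConceptHierarchy α) (c : α) : Finset α :=
  H.concepts.filter (fun c' => c ∈ H.children c')

/-- Limited overlap: each concept at level `≥ 1` shares at most `o·k` children
with the union of the other concepts at the same level. -/
def LimitedOverlap (H : ConceptHierarchy α) (o : ℝ) : Prop :=
  ∀ c ∈ H.concepts, 1 ≤ H.level c →
    (((H.children c).filter (fun d => ∃ c' ∈ H.concepts, c' ≠ c ∧
        H.level c' = H.level c ∧ d ∈ H.children c')).card : ℝ) ≤ o * H.k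

/-- Tree hierarchy: no overlap among child sets of distinct same-level concepts. -/
def IsTree (H : ConceptHierarchy α) : Prop :=
  ∀ c ∈ H.concepts, ∀ c' ∈ H.concepts, H.level c = H.level c' → c ≠ c' →
    Disjoint (H.children c) (H.children c')

/-- Descendant relation: reflexive-transitive closure of the children relation. -/
inductive Desc (H : ConceptHierarchy α) : α → α → Prop
  | refl (c : α) : Desc H c c
  | step {c d e : α} : d ∈ H.children c → Desc H d e → Desc H c e

/-- The level-0 descendants of a concept. -/
def leaves (H : ConceptHierarchy α) (c : α) : Finset α :=
  H.concepts.filter (fun d => H.Desc c d ∧ H.level d = 0)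

/-- Level-indexed bottom-up support sets: `S(0) = B ∩ C₀`,
`S(ℓ) = {c at level ℓ : |children(c) ∩ S(ℓ-1)| ≥ r·k}`. -/
def suppL (H : ConceptHierarchy α) (r : ℝ) (B : Finset α) : ℕ → Finset α
  | 0 => B ∩ H.concepts.filter (fun c => H.level c = 0)
  | (ℓ+1) => H.concepts.filter (fun c => H.level c = ℓ + 1 ∧
      r * H.k ≤ ((H.children c ∩ suppL H r B ℓ).card : ℝ))

/-- `supp_r(B) = ⋃_ℓ S(ℓ)`. -/
def supp (H : ConceptHierarchy α) (r : ℝ) (B : Finset α) : Set α :=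
  ⋃ ℓ, ↑(H.suppL r B ℓ)

/-- Time-and-level-indexed support sets with feedback strength `f`:
`S(0,t) = B`; `S(ℓ,0) = ∅` for `ℓ ≥ 1`; and
`S(ℓ,t) = S(ℓ,t-1) ∪ {c at level ℓ : |children(c) ∩ S(ℓ-1,t-1)| + f·|parents(c) ∩ S(ℓ+1,t-1)| ≥ r·k}`. -/
def suppFB (H : ConceptHierarchy α) (r f : ℝ) (B : Finset α) : ℕ → ℕ → Finset α
  | 0, _ => B
  | (_+1), 0 => ∅
  | (ℓ+1), (t+1) => suppFB H r f B (ℓ+1) t ∪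
      H.concepts.filter (fun c => H.level c = ℓ + 1 ∧
        r * H.k ≤ ((H.children c ∩ suppFB H r f B ℓ t).card : ℝ) +
          f * ((H.parents c ∩ suppFB H r f B (ℓ+2) t).card : ℝ))
  termination_by ℓ t => t

/-- `supp_{r,f}(B,*,t) = ⋃_ℓ S(ℓ,t)`. -/
def suppFBatTime (H : ConceptHierarchy α) (r f : ℝ) (B : Finset α) (t : ℕ) : Set α :=
  ⋃ ℓ, ↑(H.suppFB r f B ℓ t)

/-- `supp_{r,f}(B) = ⋃_{ℓ,t} S(ℓ,t)`. -/
def suppFBSet (H : ConceptHierarchy α) (r f : ℝ) (B : Finset α) : Set α :=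
  ⋃ t, H.suppFBatTime r f B t

end ConceptHierarchy

/-- Feed-forward 0/1 weights: weight 1 from the rep of a child to the rep of its
parent, weight 0 otherwise. -/
def ffWeight {α ν : Type} [DecidableEq α] (H : ConceptHierarchy α) (rep : α → ν)
    (u v : ν) : ℝ :=
  if ∃ c ∈ H.concepts, ∃ c' ∈ H.children c, u = rep c' ∧ v = rep c then 1 else 0

/-- Feedback-network weights: weight 1 upward (rep of child to rep of parent),
weight `f` downward (rep of parent to rep of child), 0 otherwise. -/
def fbWeight {α ν : Type} [DecidableEq α] (H : ConceptHierarchy α) (rep : α → ν)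
    (f : ℝ) (u v : ν) : ℝ :=
  if ∃ c ∈ H.concepts, ∃ c' ∈ H.children c, u = rep c' ∧ v = rep c then 1
  else if ∃ c ∈ H.concepts, ∃ c' ∈ H.children c, u = rep c ∧ v = rep c' then f
  else 0

/-! Without feedback, `S(ℓ+1, t+1)` depends only on `S(ℓ+1, t)` and `S(ℓ, t)`. Once level `ℓ` is
constant from time `ℓ` on, the concepts it promotes to level `ℓ+1` all arrive at time `ℓ+1`,
so level `ℓ+1` is constant from time `ℓ+1` on. -/

namespace ConceptHierarchy

variable {α : Type} [DecidableEq α] (H : ConceptHierarchy α) (r : ℝ) (B : Finset α)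

theorem suppFB_mono (f : ℝ) (ℓ : ℕ) : Monotone (H.suppFB r f B ℓ) := by
  refine monotone_nat_of_le_succ fun t => ?_
  cases ℓ with
  | zero => simp only [suppFB, le_refl]
  | succ ℓ => rw [suppFB]; exact Finset.subset_union_left

theorem suppFB_zero_succ_succ (ℓ t : ℕ) :
    H.suppFB r 0 B (ℓ + 1) (t + 1) = H.suppFB r 0 B (ℓ + 1) t ∪
      H.concepts.filter (fun c => H.level c = ℓ + 1 ∧
        r * H.k ≤ ((H.children c ∩ H.suppFB r 0 B ℓ t).card : ℝ)) := by
  rw [suppFB]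
  simp only [zero_mul, add_zero]

theorem suppFB_zero_eq_of_le {ℓ t : ℕ} (h : ℓ ≤ t) : H.suppFB r 0 B ℓ t = H.suppFB r 0 B ℓ ℓ := by
  induction ℓ generalizing t with
  | zero => simp only [suppFB]
  | succ ℓ ih =>
    induction t, h using Nat.le_induction with
    | base => rfl
    | succ t hℓt iht =>
      rw [suppFB_zero_succ_succ, iht, ih (by omega), Finset.union_eq_left,
        suppFB_zero_succ_succ]
      exact Finset.subset_union_right

end ConceptHierarchy

theorem suppFB_zero_stabilize_general {α : Type} [DecidableEq α] (H : ConceptHierarchy α)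
    (r : ℝ) (B : Finset α) :
    ∀ ℓ : ℕ, (⋃ t : ℕ, (↑(H.suppFB r 0 B ℓ t) : Set α)) = ↑(H.suppFB r 0 B ℓ ℓ) := by
  intro ℓ
  refine (Set.iUnion_subset fun t => ?_).antisymm (Set.subset_iUnion_of_subset ℓ subset_rfl)
  rw [← H.suppFB_zero_eq_of_le r B (le_max_right t ℓ)]
  exact_mod_cast H.suppFB_mono r B 0 ℓ (le_max_left t ℓ)

/-- with zero feedback, the time-indexed support sets at level `ℓ`
stabilize by time `ℓ`: `supp_{r,0}(B,ℓ,*) = supp_{r,0}(B,ℓ,ℓ)`. -/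
theorem suppFB_zero_stabilize {α : Type} [DecidableEq α] (H : ConceptHierarchy α)
    (r : ℝ) (B : Finset α) (hB : ∀ b ∈ B, H.level b = 0) :
    ∀ ℓ : ℕ, (⋃ t : ℕ, (↑(H.suppFB r 0 B ℓ t) : Set α)) = ↑(H.suppFB r 0 B ℓ ℓ) :=
  suppFB_zero_stabilize_general H r B
end
end

section
/- In a tree concept hierarchy, if a concept c is in the supported set S(t) at time t but its parent is not in S(t), then c is supported purely bottom-up, i.e., c ∈ supp_{r,0}(B). -/
open scoped Classical
noncomputable section

/-!
A concept none of whose parents is supported receives no top-down input, so whenever it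
enters the support it does so on the strength of its children alone. In a tree such a
concept `c` is the only parent of each of its children, and `c` was not yet supported at
the previous time step, so by induction on time those children were themselves supported
bottom-up, and hence so is `c`.
-/

namespace ConceptHierarchy

variable {α : Type} [DecidableEq α] (H : ConceptHierarchy α)

theorem IsTree.eq_of_mem_children {H : ConceptHierarchy α} (hT : H.IsTree) {c p d : α}
    (hc : c ∈ H.concepts) (hp : p ∈ H.concepts) (hdc : d ∈ H.children c)
    (hdp : d ∈ H.children p) : p = c := by
  by_contra hne
  have hlevel : H.level p = H.level c := by
    have := H.children_level c hc d hdc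
    have := H.children_level p hp d hdp
    omega
  exact Finset.disjoint_left.mp (hT p hp c hc hlevel hne) hdp hdc

theorem suppFB_subset_suppFB_succ (r f : ℝ) (B : Finset α) (ℓ t : ℕ) :
    H.suppFB r f B ℓ t ⊆ H.suppFB r f B ℓ (t + 1) := by
  cases ℓ with
  | zero => simp only [suppFB, subset_refl]
  | succ ℓ => rw [suppFB]; exact Finset.subset_union_left

theorem mem_suppFB_succ_succ {r f : ℝ} {B : Finset α} {ℓ t : ℕ} {c : α} :
    c ∈ H.suppFB r f B (ℓ + 1) (t + 1) ↔ c ∈ H.suppFB r f B (ℓ + 1) t ∨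
      (c ∈ H.concepts ∧ H.level c = ℓ + 1 ∧
        r * H.k ≤ ((H.children c ∩ H.suppFB r f B ℓ t).card : ℝ) +
          f * ((H.parents c ∩ H.suppFB r f B (ℓ + 2) t).card : ℝ)) := by
  rw [suppFB, Finset.mem_union, Finset.mem_filter]

theorem mem_suppFB_zero_of_forall_parents_notMem {H : ConceptHierarchy α} (hT : H.IsTree)
    (r f : ℝ) (B : Finset α) (t : ℕ) :
    ∀ ℓ c, c ∈ H.suppFB r f B ℓ t →
      (∀ p ∈ H.parents c, p ∉ H.suppFB r f B (ℓ + 1) t) → c ∈ H.suppFB r 0 B ℓ t := by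
  induction t with
  | zero =>
    rintro (_ | ℓ) c hc -
    · simpa only [suppFB] using hc
    · simp only [suppFB, Finset.notMem_empty] at hc
  | succ t ih =>
    rintro (_ | ℓ) c hc hpar
    · simpa only [suppFB] using hc
    have hpar_prev : ∀ p ∈ H.parents c, p ∉ H.suppFB r f B (ℓ + 2) t :=
      fun p hp hpS => hpar p hp (H.suppFB_subset_suppFB_succ r f B _ t hpS)
    rw [mem_suppFB_succ_succ]
    by_cases hold : c ∈ H.suppFB r f B (ℓ + 1) t
    · exact Or.inl (ih _ c hold hpar_prev)
    obtain ⟨hcC, hlevel, hthreshold⟩ := (H.mem_suppFB_succ_succ.mp hc).resolve_left hold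
    refine Or.inr ⟨hcC, hlevel, ?_⟩
    have hno_feedback : H.parents c ∩ H.suppFB r f B (ℓ + 2) t = ∅ :=
      Finset.disjoint_iff_inter_eq_empty.mp (Finset.disjoint_left.mpr hpar_prev)
    have hchildren : H.children c ∩ H.suppFB r f B ℓ t ⊆ H.children c ∩ H.suppFB r 0 B ℓ t := by
      intro d hd
      obtain ⟨hdc, hdS⟩ := Finset.mem_inter.mp hd
      refine Finset.mem_inter.mpr ⟨hdc, ih ℓ d hdS fun p hp hpS => hold ?_⟩
      obtain ⟨hpC, hdp⟩ := Finset.mem_filter.mp hp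
      rwa [← hT.eq_of_mem_children hcC hpC hdc hdp]
    calc r * H.k ≤ ((H.children c ∩ H.suppFB r f B ℓ t).card : ℝ) := by
          simpa only [hno_feedback, Finset.card_empty, Nat.cast_zero, mul_zero, add_zero]
            using hthreshold
      _ ≤ ((H.children c ∩ H.suppFB r 0 B ℓ t).card : ℝ) := by
          exact_mod_cast Finset.card_le_card hchildren
      _ = _ := by rw [zero_mul, add_zero]

end ConceptHierarchy

theorem node_and_parent_general {α : Type} [DecidableEq α] (H : ConceptHierarchy α)
    (hTree : H.IsTree) (r f : ℝ) (B : Finset α)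
    (t : ℕ) (c : α)
    (hc : c ∈ H.suppFBatTime r f B t)
    (hp : ∀ p ∈ H.parents c, p ∉ H.suppFBatTime r f B t) :
    c ∈ H.suppFBSet r 0 B := by
  obtain ⟨ℓ, hcℓ⟩ := Set.mem_iUnion.mp hc
  have hpℓ : ∀ p ∈ H.parents c, p ∉ H.suppFB r f B (ℓ + 1) t :=
    fun p hpc hpS => hp p hpc (Set.mem_iUnion.mpr ⟨ℓ + 1, hpS⟩)
  exact Set.mem_iUnion.mpr ⟨t, Set.mem_iUnion.mpr
    ⟨ℓ, ConceptHierarchy.mem_suppFB_zero_of_forall_parents_notMem hTree r f B t ℓ c hcℓ hpℓ⟩⟩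

/-- in a tree hierarchy, if `c ∈ S(t)` but its parent is not in `S(t)`,
then `c` is supported purely bottom-up, i.e. `c ∈ supp_{r,0}(B)`. -/
theorem node_and_parent {α : Type} [DecidableEq α] (H : ConceptHierarchy α)
    (hTree : H.IsTree) (r f : ℝ) (hf : 0 ≤ f) (B : Finset α)
    (hB : ∀ b ∈ B, H.level b = 0) (t : ℕ) (c : α)
    (hc : c ∈ H.suppFBatTime r f B t)
    (hp : ∀ p ∈ H.parents c, p ∉ H.suppFBatTime r f B t) :
    c ∈ H.suppFBSet r 0 B :=
  node_and_parent_general H hTree r f B t c hc hp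
end
end

section
/- In the feed-forward recognition network with 0/1 weights and threshold τ = r·k, if B ⊆ C_0 is presented at time t, then for any concept c, rep(c) fires at time t + level(c) if and only if c ∈ supp_r(B). -/
/-! Induction on the level. The weights into `rep c` are the indicator of the child relation and
`rep` is injective on concepts, so the potential of `rep c` at time `s + 1` is the number of
children of `c` whose representatives fired at time `s`. At time `t + level c - 1` these are, by
induction, exactly the children lying in `S(level c - 1)`, and counting them against `r·k` is the
defining condition of `S(level c)`. -/

open scoped Classical
noncomputable section

namespace ConceptHierarchy

variable {α : Type} [DecidableEq α] (H : ConceptHierarchy α) (r : ℝ) (B : Finset α)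

theorem level_of_mem_suppL {ℓ : ℕ} {c : α} (hc : c ∈ H.suppL r B ℓ) : H.level c = ℓ := by
  cases ℓ with
  | zero => simp only [suppL, Finset.mem_inter, Finset.mem_filter] at hc; exact hc.2.2
  | succ ℓ => simp only [suppL, Finset.mem_filter] at hc; exact hc.2.1

theorem mem_supp_iff_mem_suppL_level {c : α} : c ∈ H.supp r B ↔ c ∈ H.suppL r B (H.level c) := by
  refine ⟨fun h => ?_, fun h => Set.mem_iUnion.mpr ⟨_, h⟩⟩
  obtain ⟨ℓ, hℓ⟩ := Set.mem_iUnion.mp h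
  rwa [H.level_of_mem_suppL r B hℓ]

theorem mem_suppL_succ_iff {ℓ : ℕ} {c : α} (hc : c ∈ H.concepts) (hlev : H.level c = ℓ + 1) :
    c ∈ H.suppL r B (ℓ + 1) ↔ r * H.k ≤ ((H.children c ∩ H.suppL r B ℓ).card : ℝ) := by
  simp only [suppL, Finset.mem_filter, hc, hlev, true_and]

end ConceptHierarchy

section FeedForwardNetwork

variable {α ν : Type} [DecidableEq α] (H : ConceptHierarchy α) (rep : α → ν)

theorem ffWeight_rep (hrep_inj : ∀ c ∈ H.concepts, ∀ c' ∈ H.concepts, rep c = rep c' → c = c')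
    {c : α} (hc : c ∈ H.concepts) (v : ν) :
    ffWeight H rep v (rep c) = if v ∈ (H.children c).image rep then 1 else 0 := by
  unfold ffWeight
  congr 1
  refine propext ⟨?_, ?_⟩
  · rintro ⟨c₀, hc₀, c', hc', rfl, hcc₀⟩
    obtain rfl := hrep_inj c hc c₀ hc₀ hcc₀
    exact Finset.mem_image_of_mem rep hc'
  · intro hv
    obtain ⟨c', hc', rfl⟩ := Finset.mem_image.mp hv
    exact ⟨c, hc, c', hc', rfl, rfl⟩

theorem sum_ffWeight_rep (hrep_inj : ∀ c ∈ H.concepts, ∀ c' ∈ H.concepts, rep c = rep c' → c = c')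
    {c : α} (hc : c ∈ H.concepts) (s : Finset ν) :
    ∑ v ∈ s, ffWeight H rep v (rep c) = ((H.children c).filter (fun c' => rep c' ∈ s)).card := by
  have hinj : Set.InjOn rep ((H.children c).filter (fun c' => rep c' ∈ s)) :=
    fun x hx y hy => hrep_inj x (H.children_mem c hc x (Finset.mem_filter.mp hx).1)
      y (H.children_mem c hc y (Finset.mem_filter.mp hy).1)
  rw [Finset.sum_congr rfl fun v _ => ffWeight_rep H rep hrep_inj hc v, Finset.sum_boole,
    ← Finset.card_image_of_injOn hinj]
  congr 2
  ext v
  simp only [Finset.mem_filter, Finset.mem_image]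
  constructor
  · rintro ⟨hv, c', hc', rfl⟩
    exact ⟨c', ⟨hc', hv⟩, rfl⟩
  · rintro ⟨c', ⟨hc', hv⟩, rfl⟩
    exact ⟨hv, c', hc', rfl⟩

variable (layer : ν → ℕ) (r : ℝ) (firing : ν → ℕ → Prop)

theorem firing_leaf_iff_mem_suppL_zero
    (hrep_inj : ∀ c ∈ H.concepts, ∀ c' ∈ H.concepts, rep c = rep c' → c = c')
    (hrep_layer : ∀ c ∈ H.concepts, layer (rep c) = H.level c)
    (B : Finset α) (hB : ∀ b ∈ B, b ∈ H.concepts) (t : ℕ)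
    (hpres : ∀ u : ν, layer u = 0 → (firing u t ↔ ∃ b ∈ B, u = rep b))
    {c : α} (hc : c ∈ H.concepts) (hlev : H.level c = 0) :
    firing (rep c) t ↔ c ∈ H.suppL r B 0 := by
  rw [hpres (rep c) (hlev ▸ hrep_layer c hc)]
  simp only [ConceptHierarchy.suppL, Finset.mem_inter, Finset.mem_filter, hc, hlev, and_self,
    and_true]
  constructor
  · rintro ⟨b, hb, hcb⟩
    rwa [hrep_inj c hc b (hB b hb) hcb]
  · exact fun hcB => ⟨c, hcB, rfl⟩

theorem firing_succ_iff_card_children_firing [Fintype ν]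
    (hrep_inj : ∀ c ∈ H.concepts, ∀ c' ∈ H.concepts, rep c = rep c' → c = c')
    (hrep_layer : ∀ c ∈ H.concepts, layer (rep c) = H.level c)
    (hdyn : ∀ u : ν, 1 ≤ layer u → ∀ s : ℕ, (firing u (s + 1) ↔
        r * H.k ≤ ∑ v ∈ Finset.univ.filter (fun v => layer v + 1 = layer u ∧ firing v s),
          ffWeight H rep v u))
    {c : α} (hc : c ∈ H.concepts) (hlev : 1 ≤ H.level c) (s : ℕ) :
    firing (rep c) (s + 1) ↔
      r * H.k ≤ ((H.children c).filter (fun c' => firing (rep c') s)).card := by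
  rw [hdyn (rep c) (hrep_layer c hc ▸ hlev) s, sum_ffWeight_rep H rep hrep_inj hc]
  suffices h : ∀ c' ∈ H.children c,
      rep c' ∈ Finset.univ.filter (fun v => layer v + 1 = layer (rep c) ∧ firing v s) ↔
        firing (rep c') s by
    rw [Finset.filter_congr h]
  intro c' hc'
  have hlayer : layer (rep c') + 1 = layer (rep c) := by
    rw [hrep_layer c' (H.children_mem c hc c' hc'), hrep_layer c hc, H.children_level c hc c' hc']
  simp only [Finset.mem_filter, Finset.mem_univ, hlayer, true_and]

end FeedForwardNetwork

theorem ff_fires_iff_supported_general {α ν : Type} [DecidableEq α] [Fintype ν]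
    (H : ConceptHierarchy α) (rep : α → ν) (layer : ν → ℕ)
    (hrep_inj : ∀ c ∈ H.concepts, ∀ c' ∈ H.concepts, rep c = rep c' → c = c')
    (hrep_layer : ∀ c ∈ H.concepts, layer (rep c) = H.level c)
    (r : ℝ) (firing : ν → ℕ → Prop) (B : Finset α)
    (hB : ∀ b ∈ B, b ∈ H.concepts ∧ H.level b = 0) (t : ℕ)
    (hpres : ∀ u : ν, layer u = 0 → (firing u t ↔ ∃ b ∈ B, u = rep b))
    (hdyn : ∀ u : ν, 1 ≤ layer u → ∀ s : ℕ, (firing u (s + 1) ↔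
        r * H.k ≤ ∑ v ∈ Finset.univ.filter (fun v => layer v + 1 = layer u ∧ firing v s),
          ffWeight H rep v u)) :
    ∀ c ∈ H.concepts, (firing (rep c) (t + H.level c) ↔ c ∈ H.supp r B) := by
  intro c hc
  rw [H.mem_supp_iff_mem_suppL_level]
  induction hℓ : H.level c generalizing c with
  | zero =>
    exact firing_leaf_iff_mem_suppL_zero H rep layer r firing hrep_inj hrep_layer B
      (fun b hb => (hB b hb).1) t hpres hc hℓ
  | succ ℓ ih =>
    have hchildren : (H.children c).filter (fun c' => firing (rep c') (t + ℓ)) =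
        H.children c ∩ H.suppL r B ℓ := by
      ext c'
      rw [Finset.mem_filter, Finset.mem_inter]
      refine and_congr_right fun hc' => ih c' (H.children_mem c hc c' hc') ?_
      have := H.children_level c hc c' hc'
      omega
    rw [← add_assoc, firing_succ_iff_card_children_firing H rep layer r firing hrep_inj hrep_layer
      hdyn hc (by omega), H.mem_suppL_succ_iff r B hc hℓ, hchildren]

/-- in the feed-forward network with 0/1 weights and threshold `τ = r·k`,
if `B` is presented at time `t`, then `rep(c)` fires at time `t + level(c)`
iff `c ∈ supp_r(B)`. -/
theorem ff_fires_iff_supported {α ν : Type} [DecidableEq α] [DecidableEq ν] [Fintype ν]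
    (H : ConceptHierarchy α) (rep : α → ν) (layer : ν → ℕ)
    (hrep_inj : ∀ c ∈ H.concepts, ∀ c' ∈ H.concepts, rep c = rep c' → c = c')
    (hrep_layer : ∀ c ∈ H.concepts, layer (rep c) = H.level c)
    (r : ℝ) (firing : ν → ℕ → Prop) (B : Finset α)
    (hB : ∀ b ∈ B, b ∈ H.concepts ∧ H.level b = 0) (t : ℕ)
    (hpres : ∀ u : ν, layer u = 0 → (firing u t ↔ ∃ b ∈ B, u = rep b))
    (hdyn : ∀ u : ν, 1 ≤ layer u → ∀ s : ℕ, (firing u (s + 1) ↔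
        r * H.k ≤ ∑ v ∈ Finset.univ.filter (fun v => layer v + 1 = layer u ∧ firing v s),
          ffWeight H rep v u)) :
    ∀ c ∈ H.concepts, (firing (rep c) (t + H.level c) ↔ c ∈ H.supp r B) :=
  ff_fires_iff_supported_general H rep layer hrep_inj hrep_layer r firing B hB t hpres hdyn
end
end

section
/- In a concept hierarchy with overlap bound o < r₁, and the 0/1-weight feed-forward network with threshold τ ≥ r₁k: if concept c' is shown at time t (i.e., exactly leaves(c') is presented) and c ≠ c' is another concept with level(c) = level(c'), then rep(c) does not fire at time t + level(c). -/
open scoped Classical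
noncomputable section

/-!
Showing `c'` lets only reps of descendants of `c'` fire, one level per time step.
By induction on the level, the rep of a concept `d` with `level d ≤ level c'` that is not a
descendant of `c'` stays silent at time `t + level d`: the firing children of `d` are then
descendants of `c'`, hence children that `d` shares with another concept of its level (the
parent of the child on its path from `c'`). Limited overlap leaves at most `o·k < r₁k ≤ τ` of
them, too few to reach the threshold. Since `c ≠ c'` lie on the same level, `c` is not a
descendant of `c'`.
-/

namespace ConceptHierarchy

variable {α : Type} [DecidableEq α] {H : ConceptHierarchy α}

namespace Desc

theorem mem_concepts {a b : α} (h : H.Desc a b) (ha : a ∈ H.concepts) : b ∈ H.concepts := by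
  induction h with
  | refl => exact ha
  | step hch _ ih => exact ih (H.children_mem _ ha _ hch)

theorem level_le {a b : α} (h : H.Desc a b) (ha : a ∈ H.concepts) :
    H.level b ≤ H.level a := by
  induction h with
  | refl => exact le_rfl
  | step hch _ ih =>
    have := H.children_level _ ha _ hch
    have := ih (H.children_mem _ ha _ hch)
    omega

theorem level_lt_of_ne {a b : α} (h : H.Desc a b) (ha : a ∈ H.concepts) (hne : a ≠ b) :
    H.level b < H.level a := by
  cases h with
  | refl => exact absurd rfl hne
  | step hch hd =>
    have := H.children_level _ ha _ hch
    have := hd.level_le (H.children_mem _ ha _ hch)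
    omega

theorem exists_parent_of_ne {a b : α} (h : H.Desc a b) (hne : a ≠ b) :
    ∃ p, H.Desc a p ∧ b ∈ H.children p := by
  induction h with
  | refl => exact absurd rfl hne
  | @step a d b hch hd ih =>
    by_cases hdb : d = b
    · exact ⟨a, .refl a, hdb ▸ hch⟩
    · obtain ⟨p, hap, hbp⟩ := ih hdb
      exact ⟨p, .step hch hap, hbp⟩

end Desc

variable (H)

theorem exists_mem_level_eq_L {c : α} (hc : c ∈ H.concepts) :
    ∃ d ∈ H.concepts, H.level d = H.L := by
  obtain ⟨d, hd, hmax⟩ := H.concepts.exists_max_image H.level ⟨c, hc⟩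
  refine ⟨d, hd, le_antisymm (H.level_le d hd) (not_lt.mp fun hlt => ?_)⟩
  obtain ⟨p, hp, hdp⟩ := H.has_parent d hd hlt
  have := H.children_level p hp d hdp
  have := hmax p hp
  omega

theorem one_le_k {c : α} (hc : c ∈ H.concepts) : 1 ≤ H.k := by
  obtain ⟨d, hd, hdL⟩ := H.exists_mem_level_eq_L hc
  rw [← H.top_card]
  exact Finset.card_pos.mpr ⟨d, Finset.mem_filter.mpr ⟨hd, hdL⟩⟩

/-- `LimitedOverlap H o` says `#(H.sharedChildren c) ≤ o·k` at every level `≥ 1`. -/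
def sharedChildren (c : α) : Finset α :=
  (H.children c).filter fun d => ∃ c' ∈ H.concepts, c' ≠ c ∧
    H.level c' = H.level c ∧ d ∈ H.children c'

theorem filter_desc_children_subset_sharedChildren {c' d : α} (hc' : c' ∈ H.concepts)
    (hd : d ∈ H.concepts) (hlev : H.level d ≤ H.level c') (hnd : ¬ H.Desc c' d) :
    (H.children d).filter (H.Desc c') ⊆ H.sharedChildren d := by
  intro e he
  obtain ⟨hed, hc'e⟩ := Finset.mem_filter.mp he
  have hel := H.children_level d hd e hed
  have hne : c' ≠ e := by rintro rfl; omega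
  obtain ⟨q, hc'q, heq⟩ := hc'e.exists_parent_of_ne hne
  have hq := hc'q.mem_concepts hc'
  have hql := H.children_level q hq e heq
  exact Finset.mem_filter.mpr ⟨hed, q, hq, fun hqd => hnd (hqd ▸ hc'q), by omega, heq⟩

theorem card_filter_desc_children_lt {o r : ℝ} (hO : H.LimitedOverlap o) (hor : o < r)
    {c' d : α} (hc' : c' ∈ H.concepts) (hd : d ∈ H.concepts) (hd1 : 1 ≤ H.level d)
    (hlev : H.level d ≤ H.level c') (hnd : ¬ H.Desc c' d) :
    (((H.children d).filter (H.Desc c')).card : ℝ) < r * H.k := by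
  have hk : (0 : ℝ) < H.k := by exact_mod_cast H.one_le_k hd
  calc (((H.children d).filter (H.Desc c')).card : ℝ)
      ≤ (H.sharedChildren d).card := by
        exact_mod_cast Finset.card_le_card
          (H.filter_desc_children_subset_sharedChildren hc' hd hlev hnd)
    _ ≤ o * H.k := hO d hd hd1
    _ < r * H.k := mul_lt_mul_of_pos_right hor hk

end ConceptHierarchy

open ConceptHierarchy

section FeedForward

variable {α ν : Type} [DecidableEq α] (H : ConceptHierarchy α) {rep : α → ν}

theorem ffWeight_rep_eq {d : α} (hd : d ∈ H.concepts)
    (hrep_inj : ∀ c ∈ H.concepts, ∀ c' ∈ H.concepts, rep c = rep c' → c = c') (v : ν) :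
    ffWeight H rep v (rep d) = if ∃ e ∈ H.children d, v = rep e then 1 else 0 := by
  unfold ffWeight
  congr 1
  apply propext
  constructor
  · rintro ⟨p, hp, e, he, rfl, hdp⟩
    exact ⟨e, hrep_inj d hd p hp hdp ▸ he, rfl⟩
  · rintro ⟨e, he, rfl⟩
    exact ⟨d, hd, e, he, rfl, rfl⟩

theorem sum_ffWeight_rep_le_card {d : α} (hd : d ∈ H.concepts)
    (hrep_inj : ∀ c ∈ H.concepts, ∀ c' ∈ H.concepts, rep c = rep c' → c = c') (T : Finset ν) :
    ∑ v ∈ T, ffWeight H rep v (rep d) ≤ ((H.children d).filter fun e => rep e ∈ T).card := by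
  simp only [ffWeight_rep_eq H hd hrep_inj, Finset.sum_boole, Nat.cast_le]
  calc (T.filter fun v => ∃ e ∈ H.children d, v = rep e).card
      ≤ (((H.children d).filter fun e => rep e ∈ T).image rep).card := by
        refine Finset.card_le_card fun v hv => ?_
        obtain ⟨hvT, e, he, rfl⟩ := Finset.mem_filter.mp hv
        exact Finset.mem_image_of_mem rep (Finset.mem_filter.mpr ⟨he, hvT⟩)
    _ ≤ ((H.children d).filter fun e => rep e ∈ T).card := Finset.card_image_le

theorem le_card_children_firing [Fintype ν] {layer : ν → ℕ} {firing : ν → ℕ → Prop} {τ : ℝ}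
    (hrep_inj : ∀ c ∈ H.concepts, ∀ c' ∈ H.concepts, rep c = rep c' → c = c')
    (hrep_layer : ∀ c ∈ H.concepts, layer (rep c) = H.level c)
    (hdyn : ∀ u : ν, 1 ≤ layer u → ∀ s : ℕ, (firing u (s + 1) ↔
        τ ≤ ∑ v ∈ Finset.univ.filter (fun v => layer v + 1 = layer u ∧ firing v s),
          ffWeight H rep v u))
    {d : α} (hd : d ∈ H.concepts) (hd1 : 1 ≤ H.level d) {s : ℕ}
    (hfire : firing (rep d) (s + 1)) :
    τ ≤ ((H.children d).filter fun e => firing (rep e) s).card := by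
  rw [hdyn (rep d) (hrep_layer d hd ▸ hd1)] at hfire
  refine hfire.trans ((sum_ffWeight_rep_le_card H hd hrep_inj _).trans ?_)
  refine Nat.cast_le.mpr (Finset.card_le_card (Finset.monotone_filter_right _ fun e _ he => ?_))
  exact (Finset.mem_filter.mp he).2.2

theorem not_firing_of_not_desc [Fintype ν] {layer : ν → ℕ} {firing : ν → ℕ → Prop}
    {o r₁ τ : ℝ}
    (hrep_inj : ∀ c ∈ H.concepts, ∀ c' ∈ H.concepts, rep c = rep c' → c = c')
    (hrep_layer : ∀ c ∈ H.concepts, layer (rep c) = H.level c)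
    (hO : H.LimitedOverlap o) (hor : o < r₁) (hτ : r₁ * H.k ≤ τ)
    {c' : α} (hc' : c' ∈ H.concepts) {t : ℕ}
    (hpres : ∀ u : ν, layer u = 0 → (firing u t ↔ ∃ b ∈ H.leaves c', u = rep b))
    (hdyn : ∀ u : ν, 1 ≤ layer u → ∀ s : ℕ, (firing u (s + 1) ↔
        τ ≤ ∑ v ∈ Finset.univ.filter (fun v => layer v + 1 = layer u ∧ firing v s),
          ffWeight H rep v u))
    {d : α} (hd : d ∈ H.concepts) (hlev : H.level d ≤ H.level c') (hnd : ¬ H.Desc c' d) :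
    ¬ firing (rep d) (t + H.level d) := by
  induction hℓ : H.level d generalizing d with
  | zero =>
    rw [Nat.add_zero, hpres (rep d) (hrep_layer d hd ▸ hℓ)]
    rintro ⟨b, hb, hdb⟩
    obtain ⟨hbH, hc'b, -⟩ := Finset.mem_filter.mp hb
    exact hnd (hrep_inj d hd b hbH hdb ▸ hc'b)
  | succ ℓ ih =>
    intro hfire
    have hfiring_desc : (H.children d).filter (fun e => firing (rep e) (t + ℓ)) ⊆
        (H.children d).filter (H.Desc c') := by
      refine Finset.monotone_filter_right _ fun e hed he => by_contra fun hne => ?_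
      have hel := H.children_level d hd e hed
      exact ih (H.children_mem d hd e hed) (by omega) hne (by omega) he
    have hmany :=
      le_card_children_firing H hrep_inj hrep_layer hdyn hd (by omega) (s := t + ℓ) hfire
    have hfew := H.card_filter_desc_children_lt hO hor hc' hd (by omega) hlev hnd
    have hsub : (((H.children d).filter fun e => firing (rep e) (t + ℓ)).card : ℝ) ≤
        ((H.children d).filter (H.Desc c')).card := by
      exact_mod_cast Finset.card_le_card hfiring_desc
    linarith

end FeedForward

theorem ff_overlap_no_false_recognition_general {α ν : Type} [DecidableEq α]
    [Fintype ν]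
    (H : ConceptHierarchy α) (rep : α → ν) (layer : ν → ℕ)
    (hrep_inj : ∀ c ∈ H.concepts, ∀ c' ∈ H.concepts, rep c = rep c' → c = c')
    (hrep_layer : ∀ c ∈ H.concepts, layer (rep c) = H.level c)
    (o r₁ τ : ℝ) (hO : H.LimitedOverlap o) (hor : o < r₁) (hτ : r₁ * H.k ≤ τ)
    (firing : ν → ℕ → Prop)
    (c c' : α) (hc : c ∈ H.concepts) (hc' : c' ∈ H.concepts) (hne : c ≠ c')
    (hlev : H.level c = H.level c') (t : ℕ)
    (hpres : ∀ u : ν, layer u = 0 → (firing u t ↔ ∃ b ∈ H.leaves c', u = rep b))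
    (hdyn : ∀ u : ν, 1 ≤ layer u → ∀ s : ℕ, (firing u (s + 1) ↔
        τ ≤ ∑ v ∈ Finset.univ.filter (fun v => layer v + 1 = layer u ∧ firing v s),
          ffWeight H rep v u)) :
    ¬ firing (rep c) (t + H.level c) := by
  have hnd : ¬ H.Desc c' c := fun h => (h.level_lt_of_ne hc' hne.symm).ne hlev
  exact not_firing_of_not_desc H hrep_inj hrep_layer hO hor hτ hc' hpres hdyn hc hlev.le hnd

/-- with overlap bound `o < r₁` and threshold `τ ≥ r₁k`, showing a
concept `c'` (presenting exactly `leaves(c')`) does not make the rep of any other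
concept `c` of the same level fire at its designated time `t + level(c)`. -/
theorem ff_overlap_no_false_recognition {α ν : Type} [DecidableEq α] [DecidableEq ν]
    [Fintype ν]
    (H : ConceptHierarchy α) (rep : α → ν) (layer : ν → ℕ)
    (hrep_inj : ∀ c ∈ H.concepts, ∀ c' ∈ H.concepts, rep c = rep c' → c = c')
    (hrep_layer : ∀ c ∈ H.concepts, layer (rep c) = H.level c)
    (o r₁ τ : ℝ) (hO : H.LimitedOverlap o) (hor : o < r₁) (hτ : r₁ * H.k ≤ τ)
    (firing : ν → ℕ → Prop)
    (c c' : α) (hc : c ∈ H.concepts) (hc' : c' ∈ H.concepts) (hne : c ≠ c')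
    (hlev : H.level c = H.level c') (t : ℕ)
    (hpres : ∀ u : ν, layer u = 0 → (firing u t ↔ ∃ b ∈ H.leaves c', u = rep b))
    (hdyn : ∀ u : ν, 1 ≤ layer u → ∀ s : ℕ, (firing u (s + 1) ↔
        τ ≤ ∑ v ∈ Finset.univ.filter (fun v => layer v + 1 = layer u ∧ firing v s),
          ffWeight H rep v u)) :
    ¬ firing (rep c) (t + H.level c) :=
  ff_overlap_no_false_recognition_general H rep layer hrep_inj hrep_layer o r₁ τ hO hor hτ firing c
    c' hc hc' hne hlev t hpres hdyn
end
end

section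
/- In the feed-forward network with approximate weights (weights in [w₁,w₂] on child-to-parent rep edges, in [0, 1/k^{L+b}] otherwise) and threshold τ = (r₁+r₂)k/2 > 1/k^{b−1}: if B is presented at time t and a neuron u fires at time t + layer(u), then u = rep(c) for some concept c. -/
/-!
Induct on the layer. Input neurons fire exactly for the reps of `B`. In layer `n + 1`,
by induction only reps of level-`n` concepts fire at the relevant time, and there are at
most `k ^ (L + 1)` concepts at any level since the number of concepts at most multiplies
by `k` per level going down from the `k` top concepts. A neuron that is not a rep receives
weight at most `1 / k ^ (L + b)` on every incoming edge, so its potential is at most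
`k ^ (L + 1) / k ^ (L + b) = 1 / k ^ (b - 1) < τ` and it cannot fire.
-/

open scoped Classical
noncomputable section

namespace ConceptHierarchy

variable {α : Type} [DecidableEq α] (H : ConceptHierarchy α)

def atLevel (ℓ : ℕ) : Finset α :=
  H.concepts.filter (fun c => H.level c = ℓ)

theorem mem_atLevel {ℓ : ℕ} {c : α} : c ∈ H.atLevel ℓ ↔ c ∈ H.concepts ∧ H.level c = ℓ :=
  Finset.mem_filter

theorem card_atLevel_le_card_atLevel_succ_mul {ℓ : ℕ} (hℓ : ℓ < H.L) :
    (H.atLevel ℓ).card ≤ (H.atLevel (ℓ + 1)).card * H.k := by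
  have hcover : H.atLevel ℓ ⊆ (H.atLevel (ℓ + 1)).biUnion H.children := by
    intro c hc
    rw [mem_atLevel] at hc
    obtain ⟨p, hp, hcp⟩ := H.has_parent c hc.1 (hc.2 ▸ hℓ)
    have hlevel := H.children_level p hp c hcp
    exact Finset.mem_biUnion.2 ⟨p, (H.mem_atLevel).2 ⟨hp, by omega⟩, hcp⟩
  refine (Finset.card_le_card hcover).trans (Finset.card_biUnion_le_card_mul _ _ _ ?_)
  intro p hp
  rw [mem_atLevel] at hp
  exact (H.children_card p hp.1 (by omega)).le

theorem card_atLevel_le_pow {ℓ : ℕ} (hℓ : ℓ ≤ H.L) :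
    (H.atLevel ℓ).card ≤ H.k ^ (H.L - ℓ + 1) := by
  refine Nat.decreasingInduction
    (motive := fun ℓ _ => (H.atLevel ℓ).card ≤ H.k ^ (H.L - ℓ + 1)) (fun ℓ hℓ ih => ?_) ?_ hℓ
  · calc (H.atLevel ℓ).card ≤ (H.atLevel (ℓ + 1)).card * H.k :=
          H.card_atLevel_le_card_atLevel_succ_mul hℓ
      _ ≤ H.k ^ (H.L - (ℓ + 1) + 1) * H.k := Nat.mul_le_mul_right _ ih
      _ = H.k ^ (H.L - ℓ + 1) := by rw [← pow_succ]; congr 1; omega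
  · simpa [atLevel] using H.top_card.le

theorem card_atLevel_le (hk : 1 ≤ H.k) (ℓ : ℕ) : (H.atLevel ℓ).card ≤ H.k ^ (H.L + 1) := by
  by_cases hℓ : ℓ ≤ H.L
  · exact (H.card_atLevel_le_pow hℓ).trans (Nat.pow_le_pow_right hk (by omega))
  · have hempty : H.atLevel ℓ = ∅ :=
      Finset.filter_eq_empty_iff.2 fun c hc hlevel => hℓ (hlevel ▸ H.level_le c hc)
    simp [hempty]

theorem sum_le_of_surjOn_atLevel {ν : Type} (hk : 1 ≤ H.k) {b : ℕ} (hb : 1 ≤ b)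
    (rep : α → ν) (ℓ : ℕ) (S : Finset ν) (hS : Set.SurjOn rep (H.atLevel ℓ) S)
    (w : ν → ℝ) (hw : ∀ v ∈ S, w v ≤ 1 / (H.k : ℝ) ^ (H.L + b)) :
    ∑ v ∈ S, w v ≤ 1 / (H.k : ℝ) ^ (b - 1) := by
  have hk0 : (H.k : ℝ) ≠ 0 := by positivity
  have hcard : (S.card : ℝ) ≤ (H.k : ℝ) ^ (H.L + 1) := by
    exact_mod_cast (Finset.card_le_card_of_surjOn rep hS).trans (H.card_atLevel_le hk ℓ)
  calc ∑ v ∈ S, w v ≤ S.card * (1 / (H.k : ℝ) ^ (H.L + b)) := by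
        simpa using Finset.sum_le_card_nsmul S w _ hw
    _ ≤ (H.k : ℝ) ^ (H.L + 1) * (1 / (H.k : ℝ) ^ (H.L + b)) := by gcongr
    _ = 1 / (H.k : ℝ) ^ (b - 1) := by
        rw [show H.L + b = H.L + 1 + (b - 1) by omega, pow_add]
        field_simp
        ring

end ConceptHierarchy

theorem ff_approx_only_reps_fire_general {α ν : Type} [DecidableEq α] [Fintype ν]
    (H : ConceptHierarchy α) (hk : 2 ≤ H.k) (rep : α → ν) (layer : ν → ℕ)
    (hrep_layer : ∀ c ∈ H.concepts, layer (rep c) = H.level c)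
    (τ : ℝ) (b : ℕ) (hb : 1 ≤ b)
    (weight : ν → ν → ℝ)
    (hwother : ∀ u v : ν,
        (¬ ∃ c ∈ H.concepts, ∃ c' ∈ H.children c, u = rep c' ∧ v = rep c) →
        0 ≤ weight u v ∧ weight u v ≤ 1 / (H.k : ℝ) ^ (H.L + b))
    (hτ2 : 1 / (H.k : ℝ) ^ (b - 1) < τ)
    (firing : ν → ℕ → Prop) (B : Finset α)
    (hB : ∀ b' ∈ B, b' ∈ H.concepts ∧ H.level b' = 0) (t : ℕ)
    (hpres : ∀ u : ν, layer u = 0 → (firing u t ↔ ∃ b' ∈ B, u = rep b'))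
    (hdyn : ∀ u : ν, 1 ≤ layer u → ∀ s : ℕ, (firing u (s + 1) ↔
        τ ≤ ∑ v ∈ Finset.univ.filter (fun v => layer v + 1 = layer u ∧ firing v s),
          weight v u)) :
    ∀ u : ν, firing u (t + layer u) → ∃ c ∈ H.concepts, u = rep c := by
  suffices h : ∀ n, ∀ u, layer u = n → firing u (t + n) → ∃ c ∈ H.concepts, u = rep c from
    fun u hu => h _ u rfl hu
  intro n
  induction n with
  | zero =>
    intro u hu hfire
    obtain ⟨b', hb', rfl⟩ := (hpres u hu).1 hfire
    exact ⟨b', (hB b' hb').1, rfl⟩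
  | succ n ih =>
    intro u hu hfire
    by_contra hnot_rep
    have hreps_fire : Set.SurjOn rep (H.atLevel n)
        (Finset.univ.filter (fun v => layer v + 1 = layer u ∧ firing v (t + n))) := by
      intro v hv
      simp only [Finset.coe_filter, Finset.mem_univ, true_and, Set.mem_ofPred_eq] at hv
      obtain ⟨c, hc, rfl⟩ := ih v (by omega) hv.2
      exact ⟨c, (H.mem_atLevel).2 ⟨hc, by have := hrep_layer c hc; omega⟩, rfl⟩
    have hpotential := H.sum_le_of_surjOn_atLevel (by omega) hb rep n _ hreps_fire
      (fun v => weight v u) fun v _ =>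
        (hwother v u fun ⟨c, hc, _, _, _, huc⟩ => hnot_rep ⟨c, hc, huc⟩).2
    have hthreshold := (hdyn u (by omega) (t + n)).1 hfire
    linarith

/-- in the feed-forward network with approximate weights
(in `[w₁,w₂]` on child-to-parent rep edges, in `[0, 1/k^(L+b)]` otherwise) and
threshold `τ = (r₁+r₂)k/2 > 1/k^(b-1)`, any neuron firing at time `t + layer(u)`
is the representative of some concept. -/
theorem ff_approx_only_reps_fire {α ν : Type} [DecidableEq α] [DecidableEq ν] [Fintype ν]
    (H : ConceptHierarchy α) (hk : 2 ≤ H.k) (rep : α → ν) (layer : ν → ℕ)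
    (hrep_inj : ∀ c ∈ H.concepts, ∀ c' ∈ H.concepts, rep c = rep c' → c = c')
    (hrep_layer : ∀ c ∈ H.concepts, layer (rep c) = H.level c)
    (r₁ r₂ w₁ w₂ τ : ℝ) (b : ℕ) (hb : 1 ≤ b) (hw0 : 0 ≤ w₁) (hw12 : w₁ ≤ w₂)
    (weight : ν → ν → ℝ)
    (hwedge : ∀ c ∈ H.concepts, ∀ c' ∈ H.children c,
        w₁ ≤ weight (rep c') (rep c) ∧ weight (rep c') (rep c) ≤ w₂)
    (hwother : ∀ u v : ν,
        (¬ ∃ c ∈ H.concepts, ∃ c' ∈ H.children c, u = rep c' ∧ v = rep c) →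
        0 ≤ weight u v ∧ weight u v ≤ 1 / (H.k : ℝ) ^ (H.L + b))
    (hτ : τ = (r₁ + r₂) * H.k / 2) (hτ2 : 1 / (H.k : ℝ) ^ (b - 1) < τ)
    (firing : ν → ℕ → Prop) (B : Finset α)
    (hB : ∀ b' ∈ B, b' ∈ H.concepts ∧ H.level b' = 0) (t : ℕ)
    (hpres : ∀ u : ν, layer u = 0 → (firing u t ↔ ∃ b' ∈ B, u = rep b'))
    (hdyn : ∀ u : ν, 1 ≤ layer u → ∀ s : ℕ, (firing u (s + 1) ↔
        τ ≤ ∑ v ∈ Finset.univ.filter (fun v => layer v + 1 = layer u ∧ firing v s),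
          weight v u)) :
    ∀ u : ν, firing u (t + layer u) → ∃ c ∈ H.concepts, u = rep c :=
  ff_approx_only_reps_fire_general H hk rep layer hrep_layer τ b hb weight hwother hτ2 firing B hB t
    hpres hdyn
end
end

section
/- In the feed-forward network with approximate weights, if r₂(2w₁ − 1) ≥ r₁ and r₂ ≥ r₁(2w₂ − 1) + 2/k^b, and B is presented at time t, then: (1) if c ∈ supp_{r₂}(B) then rep(c) fires at time t + level(c); (2) if c ∉ supp_{r₁}(B) then rep(c) does not fire at time t + level(c). -/
open scoped Classical
noncomputable section

/-- in the feed-forward network with approximate weights, if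
`r₂(2w₁ − 1) ≥ r₁` and `r₂ ≥ r₁(2w₂ − 1) + 2/k^b`, then (1) supported concepts'
reps fire at their designated time and (2) unsupported concepts' reps do not. -/
theorem ff_approx_recognizes {α ν : Type} [DecidableEq α] [DecidableEq ν] [Fintype ν]
    (H : ConceptHierarchy α) (hk : 2 ≤ H.k) (rep : α → ν) (layer : ν → ℕ)
    (hrep_inj : ∀ c ∈ H.concepts, ∀ c' ∈ H.concepts, rep c = rep c' → c = c')
    (hrep_layer : ∀ c ∈ H.concepts, layer (rep c) = H.level c)
    (r₁ r₂ w₁ w₂ τ : ℝ) (b : ℕ) (hb : 1 ≤ b) (hw0 : 0 ≤ w₁) (hw12 : w₁ ≤ w₂)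
    (weight : ν → ν → ℝ)
    (hwedge : ∀ c ∈ H.concepts, ∀ c' ∈ H.children c,
        w₁ ≤ weight (rep c') (rep c) ∧ weight (rep c') (rep c) ≤ w₂)
    (hwother : ∀ u v : ν,
        (¬ ∃ c ∈ H.concepts, ∃ c' ∈ H.children c, u = rep c' ∧ v = rep c) →
        0 ≤ weight u v ∧ weight u v ≤ 1 / (H.k : ℝ) ^ (H.L + b))
    (hτ : τ = (r₁ + r₂) * H.k / 2) (hτ2 : 1 / (H.k : ℝ) ^ (b - 1) < τ)
    (hineq1 : r₁ ≤ r₂ * (2 * w₁ - 1))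
    (hineq2 : r₁ * (2 * w₂ - 1) + 2 / (H.k : ℝ) ^ b ≤ r₂)
    (firing : ν → ℕ → Prop) (B : Finset α)
    (hB : ∀ b' ∈ B, b' ∈ H.concepts ∧ H.level b' = 0) (t : ℕ)
    (hpres : ∀ u : ν, layer u = 0 → (firing u t ↔ ∃ b' ∈ B, u = rep b'))
    (hdyn : ∀ u : ν, 1 ≤ layer u → ∀ s : ℕ, (firing u (s + 1) ↔
        τ ≤ ∑ v ∈ Finset.univ.filter (fun v => layer v + 1 = layer u ∧ firing v s),
          weight v u)) :
    (∀ c ∈ H.concepts, c ∈ H.supp r₂ B → firing (rep c) (t + H.level c)) ∧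
    (∀ c ∈ H.concepts, c ∉ H.supp r₁ B → ¬ firing (rep c) (t + H.level c)) := by
    classical
  have hk1 : 1 ≤ H.k := le_trans (by norm_num) hk
  have hk0 : (0:ℝ) < (H.k:ℝ) := by
    have : 0 < H.k := lt_of_lt_of_le (by norm_num) hk
    exact_mod_cast this
  have hwnonneg : ∀ u v : ν, 0 ≤ weight u v := by
    intro u v
    by_cases h : ∃ c ∈ H.concepts, ∃ c' ∈ H.children c, u = rep c' ∧ v = rep c
    · obtain ⟨c, hc, c', hc', hu, hv⟩ := h
      subst hu; subst hv
      exact le_trans hw0 (hwedge c hc c' hc').1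
    · exact (hwother u v h).1
  have hkbpos : (0:ℝ) < 1 / (H.k:ℝ) ^ (b-1) := by positivity
  have hτpos : 0 < τ := lt_trans hkbpos hτ2
  have hr12 : 0 < r₁ + r₂ := by
    rw [hτ] at hτpos
    nlinarith
  have hw1 : 0 < w₁ := by
    rcases lt_or_eq_of_le hw0 with h | h
    · exact h
    · exfalso; rw [← h] at hineq1; nlinarith
  have hw2 : 0 < w₂ := lt_of_lt_of_le hw1 hw12
  have hτ1 : τ ≤ r₂ * H.k * w₁ := by
    rw [hτ]; nlinarith
  have hkk : (H.k:ℝ) / (H.k:ℝ) ^ b = 1 / (H.k:ℝ) ^ (b-1) := by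
    have hb' : b = 1 + (b-1) := by omega
    rw [hb', pow_add, pow_one]
    have h1 : (H.k:ℝ) ^ (1 + (b-1) - 1) = (H.k:ℝ)^(b-1) := by
      congr 1
      omega
    field_simp
    exact h1
  have hτ3 : r₁ * H.k * w₂ + 1 / (H.k:ℝ) ^ (b-1) ≤ τ := by
    rw [hτ, ← hkk]
    have h := mul_le_mul_of_nonneg_right hineq2 (le_of_lt hk0)
    have hexp : (r₁ * (2*w₂-1) + 2/(H.k:ℝ)^b) * H.k =
        2*(r₁*H.k*w₂) - r₁*H.k + 2*((H.k:ℝ)/(H.k:ℝ)^b) := by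
      field_simp
    rw [hexp] at h
    linarith
  have hlevcard : ∀ ℓ : ℕ, ((H.concepts.filter (fun c => H.level c = ℓ)).card : ℝ) ≤ (H.k:ℝ) ^ (H.L + 1) := by
    have key : ∀ d : ℕ, d ≤ H.L → (H.concepts.filter (fun c => H.level c = H.L - d)).card ≤ H.k ^ (d+1) := by
      intro d
      induction d with
      | zero =>
        intro _
        simp only [Nat.sub_zero, zero_add, pow_one]
        exact le_of_eq H.top_card
      | succ d ih =>
        intro hdL
        have hd : d ≤ H.L := Nat.le_of_succ_le hdL
        have hsub : H.concepts.filter (fun c => H.level c = H.L - (d+1)) ⊆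
            (H.concepts.filter (fun c => H.level c = H.L - d)).biUnion H.children := by
          intro c hc
          simp only [Finset.mem_filter] at hc
          obtain ⟨hcC, hcl⟩ := hc
          have hlt : H.level c < H.L := by omega
          obtain ⟨p, hpC, hcp⟩ := H.has_parent c hcC hlt
          have hpl : H.level c + 1 = H.level p := H.children_level p hpC c hcp
          exact Finset.mem_biUnion.2 ⟨p, Finset.mem_filter.2 ⟨hpC, by omega⟩, hcp⟩
        calc (H.concepts.filter (fun c => H.level c = H.L - (d+1))).card
            ≤ ((H.concepts.filter (fun c => H.level c = H.L - d)).biUnion H.children).card :=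
              Finset.card_le_card hsub
          _ ≤ ∑ p ∈ H.concepts.filter (fun c => H.level c = H.L - d), (H.children p).card :=
              Finset.card_biUnion_le
          _ ≤ ∑ _p ∈ H.concepts.filter (fun c => H.level c = H.L - d), H.k := by
              refine Finset.sum_le_sum ?_
              intro p hp
              simp only [Finset.mem_filter] at hp
              rw [H.children_card p hp.1 (by omega)]
          _ = (H.concepts.filter (fun c => H.level c = H.L - d)).card * H.k := by
              rw [Finset.sum_const, smul_eq_mul]
          _ ≤ H.k ^ (d+1) * H.k := Nat.mul_le_mul_right _ (ih hd)
          _ = H.k ^ (d+1+1) := by ring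
    intro ℓ
    by_cases hℓ : ℓ ≤ H.L
    · have h1 := key (H.L - ℓ) (Nat.sub_le _ _)
      have h2 : H.L - (H.L - ℓ) = ℓ := by omega
      rw [h2] at h1
      have h3 : H.k ^ (H.L - ℓ + 1) ≤ H.k ^ (H.L + 1) := Nat.pow_le_pow_right hk1 (by omega)
      have h4 : (H.concepts.filter (fun c => H.level c = ℓ)).card ≤ H.k ^ (H.L + 1) := le_trans h1 h3
      calc ((H.concepts.filter (fun c => H.level c = ℓ)).card : ℝ)
          ≤ ((H.k ^ (H.L+1) : ℕ) : ℝ) := by exact_mod_cast h4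
        _ = (H.k:ℝ) ^ (H.L+1) := by push_cast; ring
    · have hempty : H.concepts.filter (fun c => H.level c = ℓ) = ∅ := by
        refine Finset.filter_eq_empty_iff.2 ?_
        intro c hc hcl
        exact hℓ (hcl ▸ H.level_le c hc)
      rw [hempty]
      simp only [Finset.card_empty, Nat.cast_zero]
      positivity
  have hsupp_mem : ∀ (r : ℝ) (ℓ : ℕ) (c : α), c ∈ H.suppL r B ℓ → c ∈ H.concepts ∧ H.level c = ℓ := by
    intro r ℓ c hc
    cases ℓ with
    | zero =>
      simp only [ConceptHierarchy.suppL, Finset.mem_inter, Finset.mem_filter] at hc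
      exact ⟨hc.2.1, hc.2.2⟩
    | succ m =>
      simp only [ConceptHierarchy.suppL, Finset.mem_filter] at hc
      exact ⟨hc.1, hc.2.1⟩
  have hkLb : (0:ℝ) < 1/(H.k:ℝ)^(H.L+b) := by positivity
  have hpowmul : (H.k:ℝ)^(H.L+1) * (1/(H.k:ℝ)^(H.L+b)) ≤ 1/(H.k:ℝ)^(b-1) := by
    refine le_of_eq ?_
    have hb' : H.L + b = (H.L + 1) + (b - 1) := by omega
    rw [hb', pow_add]
    have h1 : (0:ℝ) < (H.k:ℝ)^(H.L+1) := by positivity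
    have h2 : (0:ℝ) < (H.k:ℝ)^(b-1) := by positivity
    field_simp
    rw [pow_add, pow_add, pow_one]
  have main : ∀ ℓ : ℕ,
      (∀ c ∈ H.concepts, H.level c = ℓ → c ∈ H.suppL r₂ B ℓ → firing (rep c) (t + ℓ)) ∧
      (∀ v : ν, layer v = ℓ → firing v (t + ℓ) →
        ∃ c ∈ H.concepts, H.level c = ℓ ∧ c ∈ H.suppL r₁ B ℓ ∧ v = rep c) := by
    intro ℓ
    induction ℓ with
    | zero =>
      constructor
      · intro c hcC hlev0 hcs
        have hcB : c ∈ B := by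
          simp only [ConceptHierarchy.suppL, Finset.mem_inter] at hcs
          exact hcs.1
        have hl : layer (rep c) = 0 := by
          rw [hrep_layer c hcC, hlev0]
        exact (hpres (rep c) hl).2 ⟨c, hcB, rfl⟩
      · intro v hlv hfv
        obtain ⟨b', hb', hvb⟩ := (hpres v hlv).1 hfv
        obtain ⟨hbC, hbl⟩ := hB b' hb'
        refine ⟨b', hbC, hbl, ?_, hvb⟩
        simp only [ConceptHierarchy.suppL, Finset.mem_inter, Finset.mem_filter]
        exact ⟨hb', hbC, hbl⟩
    | succ ℓ ih =>
      constructor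
      · intro c hcC hclev hcs
        have hlayer : layer (rep c) = ℓ + 1 := by rw [hrep_layer c hcC, hclev]
        have hcs' : r₂ * H.k ≤ ((H.children c ∩ H.suppL r₂ B ℓ).card : ℝ) := by
          simp only [ConceptHierarchy.suppL, Finset.mem_filter] at hcs
          exact hcs.2.2
        rw [show t + (ℓ+1) = (t+ℓ)+1 from rfl, hdyn (rep c) (by omega) (t+ℓ)]
        set F := Finset.univ.filter (fun v => layer v + 1 = layer (rep c) ∧ firing v (t+ℓ)) with hF
        set S := (H.children c ∩ H.suppL r₂ B ℓ).image rep with hS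
        have hmem : ∀ d ∈ H.children c ∩ H.suppL r₂ B ℓ, d ∈ H.concepts ∧ H.level d = ℓ := by
          intro d hd
          rw [Finset.mem_inter] at hd
          refine ⟨H.children_mem c hcC d hd.1, ?_⟩
          have := H.children_level c hcC d hd.1
          omega
        have hSF : S ⊆ F := by
          intro u hu
          rw [hS, Finset.mem_image] at hu
          obtain ⟨d, hd, rfl⟩ := hu
          obtain ⟨hdC, hdl⟩ := hmem d hd
          have hfire : firing (rep d) (t+ℓ) :=
            ih.1 d hdC hdl (Finset.mem_inter.1 hd).2
          refine Finset.mem_filter.2 ⟨Finset.mem_univ _, ?_, hfire⟩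
          rw [hrep_layer d hdC, hdl, hlayer]
        have hScard : S.card = (H.children c ∩ H.suppL r₂ B ℓ).card := by
          apply Finset.card_image_of_injOn
          intro x hx y hy hxy
          exact hrep_inj x (hmem x hx).1 y (hmem y hy).1 hxy
        have h1 : ∑ v ∈ S, weight v (rep c) ≤ ∑ v ∈ F, weight v (rep c) :=
          Finset.sum_le_sum_of_subset_of_nonneg hSF (fun v _ _ => hwnonneg v (rep c))
        have h2 : (S.card : ℝ) * w₁ ≤ ∑ v ∈ S, weight v (rep c) := by
          have h := Finset.card_nsmul_le_sum S (fun v => weight v (rep c)) w₁ ?_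
          · rwa [nsmul_eq_mul] at h
          · intro u hu
            rw [hS, Finset.mem_image] at hu
            obtain ⟨d, hd, rfl⟩ := hu
            exact (hwedge c hcC d (Finset.mem_inter.1 hd).1).1
        have h3 : r₂ * H.k * w₁ ≤ (S.card : ℝ) * w₁ := by
          rw [hScard]
          exact mul_le_mul_of_nonneg_right hcs' hw0
        linarith
      · intro v hlv hfv
        by_contra hno
        push_neg at hno
        rw [show t + (ℓ+1) = (t+ℓ)+1 from rfl] at hfv
        have hsum := (hdyn v (by omega) (t+ℓ)).1 hfv
        set F := Finset.univ.filter (fun u => layer u + 1 = layer v ∧ firing u (t+ℓ)) with hF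
        have hFmem : ∀ u ∈ F, ∃ d ∈ H.concepts, H.level d = ℓ ∧ d ∈ H.suppL r₁ B ℓ ∧ u = rep d := by
          intro u hu
          rw [hF, Finset.mem_filter] at hu
          have hlu : layer u = ℓ := by
            have := hu.2.1
            omega
          exact ih.2 u hlu hu.2.2
        have hFcard : (F.card : ℝ) ≤ (H.k:ℝ) ^ (H.L + 1) := by
          have hFsub : F ⊆ (H.concepts.filter (fun d => H.level d = ℓ)).image rep := by
            intro u hu
            obtain ⟨d, hdC, hdl, _, rfl⟩ := hFmem u hu
            exact Finset.mem_image.2 ⟨d, Finset.mem_filter.2 ⟨hdC, hdl⟩, rfl⟩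
          have ha : F.card ≤ (H.concepts.filter (fun d => H.level d = ℓ)).card :=
            le_trans (Finset.card_le_card hFsub) Finset.card_image_le
          calc (F.card : ℝ) ≤ ((H.concepts.filter (fun d => H.level d = ℓ)).card : ℝ) := by
                exact_mod_cast ha
            _ ≤ _ := hlevcard ℓ
        by_cases hvc : ∃ c ∈ H.concepts, v = rep c
        · obtain ⟨c, hcC, rfl⟩ := hvc
          have hclev : H.level c = ℓ + 1 := by rw [← hrep_layer c hcC, hlv]
          have hcns : c ∉ H.suppL r₁ B (ℓ+1) := fun h => hno c hcC hclev h rfl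
          have hccard : ((H.children c ∩ H.suppL r₁ B ℓ).card : ℝ) < r₁ * H.k := by
            by_contra hge
            push_neg at hge
            refine hcns ?_
            simp only [ConceptHierarchy.suppL, Finset.mem_filter]
            exact ⟨hcC, hclev, hge⟩
          have hb1 : ∑ u ∈ F ∩ (H.children c).image rep, weight u (rep c) ≤
              ((F ∩ (H.children c).image rep).card : ℝ) * w₂ := by
            have h := Finset.sum_le_card_nsmul (F ∩ (H.children c).image rep)
              (fun u => weight u (rep c)) w₂ ?_
            · rwa [nsmul_eq_mul] at h
            · intro u hu
              rw [Finset.mem_inter, Finset.mem_image] at hu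
              obtain ⟨_, d, hd, rfl⟩ := hu
              exact (hwedge c hcC d hd).2
          have hF1card : (((F ∩ (H.children c).image rep).card : ℝ)) < r₁ * H.k := by
            have hF1sub : F ∩ (H.children c).image rep ⊆ (H.children c ∩ H.suppL r₁ B ℓ).image rep := by
              intro u hu
              rw [Finset.mem_inter] at hu
              obtain ⟨huF, huI⟩ := hu
              obtain ⟨d, hdC, hdl, hds, rfl⟩ := hFmem u huF
              rw [Finset.mem_image] at huI
              obtain ⟨d', hd', heq⟩ := huI
              have hd'C : d' ∈ H.concepts := H.children_mem c hcC d' hd'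
              have hdd : d' = d := hrep_inj d' hd'C d hdC heq
              subst hdd
              exact Finset.mem_image.2 ⟨d', Finset.mem_inter.2 ⟨hd', hds⟩, rfl⟩
            have h1 : (F ∩ (H.children c).image rep).card ≤ (H.children c ∩ H.suppL r₁ B ℓ).card :=
              le_trans (Finset.card_le_card hF1sub) Finset.card_image_le
            calc (((F ∩ (H.children c).image rep).card : ℝ)) ≤
                ((H.children c ∩ H.suppL r₁ B ℓ).card : ℝ) := by exact_mod_cast h1
              _ < r₁ * H.k := hccard
          have hb2 : ∑ u ∈ F \ (H.children c).image rep, weight u (rep c) ≤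
              (F.card : ℝ) * (1/(H.k:ℝ)^(H.L+b)) := by
            have hle : ∑ u ∈ F \ (H.children c).image rep, weight u (rep c) ≤
                ((F \ (H.children c).image rep).card : ℝ) * (1/(H.k:ℝ)^(H.L+b)) := by
              have h := Finset.sum_le_card_nsmul (F \ (H.children c).image rep)
                (fun u => weight u (rep c)) (1/(H.k:ℝ)^(H.L+b)) ?_
              · rwa [nsmul_eq_mul] at h
              · intro u hu
                rw [Finset.mem_sdiff] at hu
                refine (hwother u (rep c) ?_).2
                rintro ⟨c₀, hc₀C, c', hc', hu', hv'⟩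
                have hcc : c₀ = c := hrep_inj c₀ hc₀C c hcC hv'.symm
                subst hcc
                exact hu.2 (Finset.mem_image.2 ⟨c', hc', hu'.symm⟩)
            refine le_trans hle ?_
            refine mul_le_mul_of_nonneg_right ?_ (le_of_lt hkLb)
            exact_mod_cast Finset.card_le_card (Finset.sdiff_subset)
          have hFk : (F.card : ℝ) * (1/(H.k:ℝ)^(H.L+b)) ≤ 1/(H.k:ℝ)^(b-1) :=
            le_trans (mul_le_mul_of_nonneg_right hFcard (le_of_lt hkLb)) hpowmul
          have hmul : ((F ∩ (H.children c).image rep).card : ℝ) * w₂ < r₁ * H.k * w₂ :=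
            mul_lt_mul_of_pos_right hF1card hw2
          have hsplit : ∑ u ∈ F, weight u (rep c) =
              ∑ u ∈ F ∩ (H.children c).image rep, weight u (rep c) +
              ∑ u ∈ F \ (H.children c).image rep, weight u (rep c) :=
            (Finset.sum_inter_add_sum_sdiff F ((H.children c).image rep) _).symm
          have hfinal : ∑ u ∈ F, weight u (rep c) < τ := by
            rw [hsplit]
            linarith
          exact absurd hsum (not_le.2 hfinal)
        · have hall : ∀ u ∈ F, weight u v ≤ 1/(H.k:ℝ)^(H.L+b) := by
            intro u hu
            refine (hwother u v ?_).2
            rintro ⟨c₀, hc₀C, c', hc', hu', hv'⟩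
            exact hvc ⟨c₀, hc₀C, hv'⟩
          have hsle : ∑ u ∈ F, weight u v ≤ (F.card:ℝ) * (1/(H.k:ℝ)^(H.L+b)) := by
            have h := Finset.sum_le_card_nsmul F (fun u => weight u v) _ hall
            rwa [nsmul_eq_mul] at h
          have h2 : (F.card:ℝ) * (1/(H.k:ℝ)^(H.L+b)) ≤ 1/(H.k:ℝ)^(b-1) :=
            le_trans (mul_le_mul_of_nonneg_right hFcard (le_of_lt hkLb)) hpowmul
          linarith
  constructor
  · intro c hcC hcs
    simp only [ConceptHierarchy.supp, Set.mem_iUnion, Finset.mem_coe] at hcs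
    obtain ⟨ℓ, hc⟩ := hcs
    have hlev := (hsupp_mem r₂ ℓ c hc).2
    rw [hlev]
    exact (main ℓ).1 c hcC hlev hc
  · intro c hcC hcs hfire
    have hl : layer (rep c) = H.level c := hrep_layer c hcC
    obtain ⟨c', hc'C, hlev', hc's, heq⟩ := (main (H.level c)).2 (rep c) hl hfire
    have hcc : c = c' := hrep_inj c hcC c' hc'C heq
    subst hcc
    refine hcs ?_
    simp only [ConceptHierarchy.supp, Set.mem_iUnion, Finset.mem_coe]
    exact ⟨H.level c, hc's⟩
end
end

section
/- In the feedback network built from a concept hierarchy, if B is presented at all times ≥ t, then firing of rep neurons is persistent: for every t' ≥ t and every concept c, if rep(c) fires at time t' then rep(c) fires at all times ≥ t'. -/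
/-!
With nonnegative weights, the total weight a non-input neuron receives is monotone in the set of
firing neurons. At time `t` only the (constant) inputs fire, so the firing set can only grow from
`t` to `t + 1`; by induction it grows at every later step, hence every neuron that fires at some
time `t' ≥ t` keeps firing.
-/

open scoped Classical
noncomputable section

open Finset

namespace ThresholdNetwork

variable {ν : Type} [Fintype ν]

/-- Total weight received by `u` at time `s + 1` from its neighbours (`adj v u`) firing at `s`. -/
def drive (w : ν → ν → ℝ) (adj : ν → ν → Prop) [DecidableRel adj] (firing : ν → ℕ → Prop)
    (u : ν) (s : ℕ) : ℝ :=
  ∑ v ∈ univ.filter (fun v => adj v u ∧ firing v s), w v u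

theorem drive_mono {w : ν → ν → ℝ} (hw : ∀ v u, 0 ≤ w v u)
    (adj : ν → ν → Prop) [DecidableRel adj]
    {firing : ν → ℕ → Prop} {s s' : ℕ} (hss' : ∀ v, firing v s → firing v s') (u : ν) :
    drive w adj firing u s ≤ drive w adj firing u s' :=
  sum_le_sum_of_subset_of_nonneg
    (monotone_filter_right _ fun v _ hv => ⟨hv.1, hss' v hv.2⟩) fun v _ _ => hw v u

variable {w : ν → ν → ℝ} {adj : ν → ν → Prop} [DecidableRel adj] {τ : ℝ}
  {firing : ν → ℕ → Prop} {input : ν → Prop} {t : ℕ}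

theorem firing_succ_of_firing (hw : ∀ v u, 0 ≤ w v u)
    (hinput : ∀ u, input u → ∀ s, t ≤ s → (firing u s ↔ firing u t))
    (hinit : ∀ u, ¬ input u → ¬ firing u t)
    (hdyn : ∀ u, ¬ input u → ∀ s, (firing u (s + 1) ↔ τ ≤ drive w adj firing u s)) :
    ∀ s, t ≤ s → ∀ u, firing u s → firing u (s + 1) := by
  intro s hs
  induction s, hs using Nat.le_induction with
  | base =>
    intro u hu
    by_cases hu_in : input u
    · exact (hinput u hu_in (t + 1) (by omega)).mpr hu
    · exact absurd hu (hinit u hu_in)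
  | succ s hs ih =>
    intro u hu
    by_cases hu_in : input u
    · exact (hinput u hu_in (s + 2) (by omega)).mpr ((hinput u hu_in (s + 1) (by omega)).mp hu)
    · rw [hdyn u hu_in] at hu ⊢
      exact hu.trans (drive_mono hw adj ih u)

theorem firing_mono (hw : ∀ v u, 0 ≤ w v u)
    (hinput : ∀ u, input u → ∀ s, t ≤ s → (firing u s ↔ firing u t))
    (hinit : ∀ u, ¬ input u → ¬ firing u t)
    (hdyn : ∀ u, ¬ input u → ∀ s, (firing u (s + 1) ↔ τ ≤ drive w adj firing u s))
    (u : ν) : MonotoneOn (firing u) (Set.Ici t) :=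
  monotoneOn_nat_Ici_of_le_succ fun s hs =>
    firing_succ_of_firing hw hinput hinit hdyn s hs u

end ThresholdNetwork

theorem fbWeight_nonneg {α ν : Type} [DecidableEq α] (H : ConceptHierarchy α) (rep : α → ν)
    {f : ℝ} (hf : 0 ≤ f) (u v : ν) : 0 ≤ fbWeight H rep f u v := by
  unfold fbWeight
  split_ifs <;> norm_num [hf]

theorem fb_persistent_firing_general {α ν : Type} [DecidableEq α] [Fintype ν]
    (H : ConceptHierarchy α) (rep : α → ν) (layer : ν → ℕ)
    (f τ : ℝ) (hf : 0 ≤ f)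
    (firing : ν → ℕ → Prop) (B : Finset α) (t : ℕ)
    (hpres : ∀ u : ν, layer u = 0 → ∀ s : ℕ, t ≤ s → (firing u s ↔ ∃ b ∈ B, u = rep b))
    (hinit : ∀ u : ν, 1 ≤ layer u → ¬ firing u t)
    (hdyn : ∀ u : ν, 1 ≤ layer u → ∀ s : ℕ, (firing u (s + 1) ↔
        τ ≤ ∑ v ∈ Finset.univ.filter
            (fun v => (layer v + 1 = layer u ∨ layer v = layer u + 1) ∧ firing v s),
          fbWeight H rep f v u)) :
    ∀ c ∈ H.concepts, ∀ t' : ℕ, t ≤ t' → firing (rep c) t' →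
      ∀ s : ℕ, t' ≤ s → firing (rep c) s := by
  have hmono := ThresholdNetwork.firing_mono (fbWeight_nonneg H rep hf)
    (adj := fun v u => layer v + 1 = layer u ∨ layer v = layer u + 1)
    (input := fun u => layer u = 0)
    (fun u hu s hs => (hpres u hu s hs).trans (hpres u hu t le_rfl).symm)
    (fun u hu => hinit u (Nat.one_le_iff_ne_zero.mpr hu))
    (fun u hu => hdyn u (Nat.one_le_iff_ne_zero.mpr hu))
  intro c _ t' ht' hfire s hs
  exact hmono (rep c) ht' (ht'.trans hs) hs hfire

/-- in the feedback network (upward weight 1, downward weight `f`),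
if `B` is presented at all times `≥ t`, firing of rep neurons is persistent. -/
theorem fb_persistent_firing {α ν : Type} [DecidableEq α] [DecidableEq ν] [Fintype ν]
    (H : ConceptHierarchy α) (rep : α → ν) (layer : ν → ℕ)
    (hrep_inj : ∀ c ∈ H.concepts, ∀ c' ∈ H.concepts, rep c = rep c' → c = c')
    (hrep_layer : ∀ c ∈ H.concepts, layer (rep c) = H.level c)
    (f τ : ℝ) (hf : 0 ≤ f)
    (firing : ν → ℕ → Prop) (B : Finset α)
    (hB : ∀ b ∈ B, b ∈ H.concepts ∧ H.level b = 0) (t : ℕ)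
    (hpres : ∀ u : ν, layer u = 0 → ∀ s : ℕ, t ≤ s → (firing u s ↔ ∃ b ∈ B, u = rep b))
    (hinit : ∀ u : ν, 1 ≤ layer u → ¬ firing u t)
    (hdyn : ∀ u : ν, 1 ≤ layer u → ∀ s : ℕ, (firing u (s + 1) ↔
        τ ≤ ∑ v ∈ Finset.univ.filter
            (fun v => (layer v + 1 = layer u ∨ layer v = layer u + 1) ∧ firing v s),
          fbWeight H rep f v u)) :
    ∀ c ∈ H.concepts, ∀ t' : ℕ, t ≤ t' → firing (rep c) t' →
      ∀ s : ℕ, t' ≤ s → firing (rep c) s :=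
  fb_persistent_firing_general H rep layer f τ hf firing B t hpres hinit hdyn
end
end

section
/- During the noise-free learning protocol with the revised Winner-Take-All rule and overlap bound o·k on shared children: (1) when a concept is shown for the first time, the neuron engaged for learning it was never previously engaged; (2) when a concept is shown again, the engaged neuron is the same one engaged at its first showing. -/
open scoped Classical
noncomputable section

/-!
A neuron engaged only for a concept `c'` has strong (`≥ w`) incoming weights only from reps of
children of `c'`, so for any other concept `c` its strong inputs among the reps of `children c`
come from shared children, of which there are at most `o·k`: it is not a WTA candidate for `c`.
Hence, by induction over the showings, the engaged neuron is never one already tuned to another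
concept. A repeated concept cannot engage a fresh neuron either: the neuron tuned to it at its
first showing is a candidate whose incoming weights all exceed `w`, so it has strictly higher
potential than a fresh neuron, whose weights all equal `w`.
-/

namespace ConceptHierarchy

variable {α ν : Type} [DecidableEq α] [DecidableEq ν] (H : ConceptHierarchy α)

def strongInputs (rep : α → ν) (w : ℝ) (W : ν → ν → ℝ) (c : α) (u : ν) : Finset ν :=
  ((H.children c).image rep).filter (fun v => w ≤ W v u)

def potential (rep : α → ν) (W : ν → ν → ℝ) (c : α) (u : ν) : ℝ :=
  ∑ v ∈ (H.children c).image rep, W v u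

variable {H}

theorem card_image_children {rep : α → ν} (hrep : Function.Injective rep) {c : α}
    (hc : c ∈ H.concepts) (hc1 : 1 ≤ H.level c) : ((H.children c).image rep).card = H.k := by
  rw [Finset.card_image_of_injective _ hrep, H.children_card c hc hc1]

theorem card_children_inter_le {o : ℝ} (hO : H.LimitedOverlap o) {c c' : α}
    (hc : c ∈ H.concepts) (hc1 : 1 ≤ H.level c) (hc' : c' ∈ H.concepts) (hne : c' ≠ c) :
    ((H.children c ∩ H.children c').card : ℝ) ≤ o * H.k := by
  refine le_trans (Nat.mono_cast (Finset.card_le_card fun d hd => ?_)) (hO c hc hc1)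
  obtain ⟨hdc, hdc'⟩ := Finset.mem_inter.mp hd
  have hlevel : H.level c' = H.level c := by
    have := H.children_level c hc d hdc
    have := H.children_level c' hc' d hdc'
    omega
  exact Finset.mem_filter.mpr ⟨hdc, c', hc', hne, hlevel, hdc'⟩

theorem card_strongInputs_le_of_tuned {o w : ℝ} (hO : H.LimitedOverlap o) {rep : α → ν}
    (hrep : Function.Injective rep) {W : ν → ν → ℝ} {c c' : α} {u : ν}
    (hc : c ∈ H.concepts) (hc1 : 1 ≤ H.level c) (hc' : c' ∈ H.concepts) (hne : c' ≠ c)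
    (htuned : ∀ v ∉ (H.children c').image rep, W v u < w) :
    ((H.strongInputs rep w W c u).card : ℝ) ≤ o * H.k := by
  have hsub : H.strongInputs rep w W c u ⊆ (H.children c ∩ H.children c').image rep := by
    intro v hv
    obtain ⟨hv, hstrong⟩ := Finset.mem_filter.mp hv
    obtain ⟨d, hd, rfl⟩ := Finset.mem_image.mp hv
    have hd' : rep d ∈ (H.children c').image rep := by
      by_contra hnot
      exact (htuned _ hnot).not_ge hstrong
    rw [hrep.mem_finset_image] at hd'
    exact Finset.mem_image_of_mem rep (Finset.mem_inter.mpr ⟨hd, hd'⟩)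
  calc ((H.strongInputs rep w W c u).card : ℝ)
      ≤ ((H.children c ∩ H.children c').image rep).card := by exact_mod_cast Finset.card_le_card hsub
    _ = (H.children c ∩ H.children c').card := by rw [Finset.card_image_of_injective _ hrep]
    _ ≤ o * H.k := card_children_inter_le hO hc hc1 hc' hne

theorem not_fresh_of_tuned_competitor {o w : ℝ} {rep : α → ν} (hrep : Function.Injective rep)
    {W : ν → ν → ℝ} {c : α} {e u : ν} (hc : c ∈ H.concepts) (hc1 : 1 ≤ H.level c)
    (hcand : o * H.k < (H.strongInputs rep w W c e).card)
    (hmax : o * H.k < (H.strongInputs rep w W c u).card →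
      H.potential rep W c u ≤ H.potential rep W c e)
    (htuned : ∀ v ∈ (H.children c).image rep, w < W v u) :
    ¬ ∀ v, W v e = w := by
  intro hfresh
  have hk : o * H.k < H.k := by
    calc o * H.k < (H.strongInputs rep w W c e).card := hcand
      _ ≤ ((H.children c).image rep).card := by exact_mod_cast Finset.card_filter_le _ _
      _ = H.k := by rw [card_image_children hrep hc hc1]
  have hall : H.strongInputs rep w W c u = (H.children c).image rep :=
    Finset.filter_true_of_mem fun v hv => (htuned v hv).le
  have hnonempty : ((H.children c).image rep).Nonempty := by
    rw [← Finset.card_pos, card_image_children hrep hc hc1]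
    rcases Nat.eq_zero_or_pos H.k with h0 | hpos
    · simp [h0] at hk
    · exact hpos
  have hlt : H.potential rep W c e < H.potential rep W c u :=
    Finset.sum_lt_sum_of_nonempty hnonempty fun v hv => (hfresh v).symm ▸ htuned v hv
  refine (hmax ?_).not_gt hlt
  rwa [hall, card_image_children hrep hc hc1]

theorem engaged_eq_iff_shown_eq_of_consistent {o w : ℝ} (hO : H.LimitedOverlap o)
    {rep : α → ν} (hrep : Function.Injective rep) {shown : ℕ → α} {engaged : ℕ → ν}
    {W : ν → ν → ℝ} {i : ℕ}
    (hshown : ∀ j ≤ i, shown j ∈ H.concepts) (hlevel : 1 ≤ H.level (shown i))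
    (hconsistent : ∀ a < i, ∀ b < i, shown a = shown b ↔ engaged a = engaged b)
    (hunengaged : (∀ j < i, engaged j ≠ engaged i) → ∀ v, W v (engaged i) = w)
    (hengagedwts : ∀ u, ∀ c ∈ H.concepts,
        (∃ j < i, engaged j = u) → (∀ j < i, engaged j = u → shown j = c) →
        ∀ v, (v ∈ (H.children c).image rep → w < W v u) ∧
             (v ∉ (H.children c).image rep → W v u < w))
    (hcand : o * H.k < (H.strongInputs rep w W (shown i) (engaged i)).card)
    (hmax : ∀ u, o * H.k < (H.strongInputs rep w W (shown i) u).card →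
      H.potential rep W (shown i) u ≤ H.potential rep W (shown i) (engaged i)) :
    ∀ j < i, shown j = shown i ↔ engaged j = engaged i := by
  have hi : shown i ∈ H.concepts := hshown i le_rfl
  have hsame_concept : ∀ a < i, engaged a = engaged i → shown a = shown i := by
    intro a ha hea
    by_contra hne
    have htuned := hengagedwts (engaged i) (shown a) (hshown a ha.le) ⟨a, ha, hea⟩
      fun b hb heb => (hconsistent b hb a ha).mpr (heb.trans hea.symm)
    exact (card_strongInputs_le_of_tuned hO hrep hi hlevel (hshown a ha.le) hne
      fun v hv => (htuned v).2 hv).not_gt hcand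
  intro j hj
  refine ⟨fun hji => ?_, hsame_concept j hj⟩
  by_cases hprev : ∃ a < i, engaged a = engaged i
  · obtain ⟨a, ha, hea⟩ := hprev
    exact ((hconsistent j hj a ha).mp (hji.trans (hsame_concept a ha hea).symm)).trans hea
  · push Not at hprev
    have htuned := hengagedwts (engaged j) (shown i) hi ⟨j, hj, rfl⟩
      fun b hb heb => ((hconsistent b hb j hj).mpr heb).trans hji
    exact absurd (hunengaged hprev) (not_fresh_of_tuned_competitor hrep hi hlevel hcand
      (hmax (engaged j)) fun v hv => (htuned v).1 hv)

theorem consistent_of_wta_learning {o w : ℝ} (hO : H.LimitedOverlap o) {rep : α → ν}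
    (hrep_inj : Function.Injective rep) {m : ℕ} {shown : ℕ → α} {engaged : ℕ → ν}
    {weight : ℕ → ν → ν → ℝ}
    (hshown : ∀ i < m, shown i ∈ H.concepts ∧ 1 ≤ H.level (shown i))
    (hunengaged : ∀ i < m, ∀ u : ν, (∀ j < i, engaged j ≠ u) → ∀ v : ν, weight i v u = w)
    (hengagedwts : ∀ i < m, ∀ u : ν, ∀ c ∈ H.concepts,
        (∃ j < i, engaged j = u) → (∀ j < i, engaged j = u → shown j = c) →
        ∀ v : ν, (v ∈ (H.children c).image rep → w < weight i v u) ∧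
                 (v ∉ (H.children c).image rep → weight i v u < w))
    (hWTAcand : ∀ i < m, o * H.k < (H.strongInputs rep w (weight i) (shown i) (engaged i)).card)
    (hWTAmax : ∀ i < m, ∀ u : ν, o * H.k < (H.strongInputs rep w (weight i) (shown i) u).card →
        H.potential rep (weight i) (shown i) u ≤
          H.potential rep (weight i) (shown i) (engaged i)) :
    ∀ i ≤ m, ∀ a < i, ∀ b < i, shown a = shown b ↔ engaged a = engaged b := by
  intro i
  induction i with
  | zero => exact fun _ a ha => absurd ha a.not_lt_zero
  | succ i ih =>
    intro hi
    have hconsistent := ih (by omega)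
    have hstep := engaged_eq_iff_shown_eq_of_consistent hO hrep_inj
      (fun j hj => (hshown j (by omega)).1) (hshown i hi).2 hconsistent
      (hunengaged i hi (engaged i)) (hengagedwts i hi) (hWTAcand i hi) (hWTAmax i hi)
    intro a ha b hb
    rcases Nat.lt_succ_iff_lt_or_eq.mp ha with ha | rfl <;>
      rcases Nat.lt_succ_iff_lt_or_eq.mp hb with hb | rfl
    · exact hconsistent a ha b hb
    · exact hstep a ha
    · rw [eq_comm, hstep b hb, eq_comm]
    · exact iff_of_true rfl rfl

end ConceptHierarchy

theorem wta_learning_engagement_general {α ν : Type} [DecidableEq α] [DecidableEq ν]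
    (H : ConceptHierarchy α) (o : ℝ) (hO : H.LimitedOverlap o)
    (rep : α → ν) (hrep_inj : Function.Injective rep)
    (m : ℕ) (shown : ℕ → α) (engaged : ℕ → ν) (weight : ℕ → ν → ν → ℝ)
    (w : ℝ)
    (hshown : ∀ i < m, shown i ∈ H.concepts ∧ 1 ≤ H.level (shown i))
    -- unengaged neurons keep all incoming weights equal to the initial weight `w`
    (hunengaged : ∀ i < m, ∀ u : ν, (∀ j < i, engaged j ≠ u) →
        ∀ v : ν, weight i v u = w)
    -- Oja's rule: a neuron engaged only for concept `c` has incoming weights from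
    -- reps of `children(c)` strictly above `w`, and all others strictly below `w`
    (hengagedwts : ∀ i < m, ∀ u : ν, ∀ c ∈ H.concepts,
        (∃ j < i, engaged j = u) → (∀ j < i, engaged j = u → shown j = c) →
        ∀ v : ν, (v ∈ (H.children c).image rep → w < weight i v u) ∧
                 (v ∉ (H.children c).image rep → weight i v u < w))
    -- the engaged neuron is a candidate: strictly more than `o·k` incoming
    -- neighbors (among the firing reps of the shown concept's children)
    -- contribute potential `≥ w`
    (hWTAcand : ∀ i < m,
        o * H.k < ((((H.children (shown i)).image rep).filter
            (fun v => w ≤ weight i v (engaged i))).card : ℝ))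
    -- and it has the highest incoming potential among all candidates
    (hWTAmax : ∀ i < m, ∀ u : ν,
        o * H.k < ((((H.children (shown i)).image rep).filter
            (fun v => w ≤ weight i v u)).card : ℝ) →
        ∑ v ∈ (H.children (shown i)).image rep, weight i v u ≤
          ∑ v ∈ (H.children (shown i)).image rep, weight i v (engaged i)) :
    (∀ i < m, (∀ j < i, shown j ≠ shown i) → ∀ j < i, engaged j ≠ engaged i) ∧
    (∀ i < m, ∀ j < i, shown j = shown i → engaged j = engaged i) := by
  have hconsistent := ConceptHierarchy.consistent_of_wta_learning hO hrep_inj hshown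
    hunengaged hengagedwts hWTAcand hWTAmax
  have hpair : ∀ i < m, ∀ j < i, shown j = shown i ↔ engaged j = engaged i :=
    fun i hi j hj => hconsistent (i + 1) hi j (hj.trans (lt_add_one i)) i (lt_add_one i)
  exact ⟨fun i hi hnew j hj heq => hnew j hj ((hpair i hi j hj).mpr heq),
    fun i hi j hj hji => (hpair i hi j hj).mp hji⟩

/-- during noise-free learning with the revised Winner-Take-All rule
(which engages, among neurons with strictly more than `o·k` incoming neighbors
contributing potential `≥ w`, one with highest incoming potential), and with the
weight properties guaranteed by Oja's rule: (1) a concept shown for the first time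
engages a never-previously-engaged neuron; (2) a concept shown again engages the
same neuron as at its first showing. -/
theorem wta_learning_engagement {α ν : Type} [DecidableEq α] [DecidableEq ν] [Fintype ν]
    (H : ConceptHierarchy α) (o : ℝ) (hO : H.LimitedOverlap o) (ho1 : o < 1)
    (hk : 1 ≤ H.k)
    (rep : α → ν) (hrep_inj : Function.Injective rep)
    (m : ℕ) (shown : ℕ → α) (engaged : ℕ → ν) (weight : ℕ → ν → ν → ℝ)
    (w : ℝ) (hw : w = 1 / (H.k : ℝ) ^ (H.L + 1)) (hwpos : 0 < w)
    (hshown : ∀ i < m, shown i ∈ H.concepts ∧ 1 ≤ H.level (shown i))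
    -- unengaged neurons keep all incoming weights equal to the initial weight `w`
    (hunengaged : ∀ i < m, ∀ u : ν, (∀ j < i, engaged j ≠ u) →
        ∀ v : ν, weight i v u = w)
    -- Oja's rule: a neuron engaged only for concept `c` has incoming weights from
    -- reps of `children(c)` strictly above `w`, and all others strictly below `w`
    (hengagedwts : ∀ i < m, ∀ u : ν, ∀ c ∈ H.concepts,
        (∃ j < i, engaged j = u) → (∀ j < i, engaged j = u → shown j = c) →
        ∀ v : ν, (v ∈ (H.children c).image rep → w < weight i v u) ∧
                 (v ∉ (H.children c).image rep → weight i v u < w))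
    -- the engaged neuron is a candidate: strictly more than `o·k` incoming
    -- neighbors (among the firing reps of the shown concept's children)
    -- contribute potential `≥ w`
    (hWTAcand : ∀ i < m,
        o * H.k < ((((H.children (shown i)).image rep).filter
            (fun v => w ≤ weight i v (engaged i))).card : ℝ))
    -- and it has the highest incoming potential among all candidates
    (hWTAmax : ∀ i < m, ∀ u : ν,
        o * H.k < ((((H.children (shown i)).image rep).filter
            (fun v => w ≤ weight i v u)).card : ℝ) →
        ∑ v ∈ (H.children (shown i)).image rep, weight i v u ≤
          ∑ v ∈ (H.children (shown i)).image rep, weight i v (engaged i)) :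
    (∀ i < m, (∀ j < i, shown j ≠ shown i) → ∀ j < i, engaged j ≠ engaged i) ∧
    (∀ i < m, ∀ j < i, shown j = shown i → engaged j = engaged i) :=
  wta_learning_engagement_general H o hO rep hrep_inj m shown engaged weight w hshown hunengaged
    hengagedwts hWTAcand hWTAmax
end
end
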